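/- Let s ≥ 0, l ≥ 0 and suppose f satisfies ‖Λ^{-s}f‖_{L²} ≤ K for some K > 0. Then ‖∇^{l+1}f‖_{L²}² ≥ C K^{-2/(l+s)} (‖∇^l f‖_{L²}²)^{1+1/(l+s)}, where C depends only on l and s. -/

import Mathlib

/-!
On the Fourier side `‖ξ‖ ^ l = (‖ξ‖ ^ (l + 1)) ^ θ * (‖ξ‖ ^ (-s)) ^ (1 - θ)` with
`θ = (l + s) / (l + s + 1)`, so Hölder's inequality with exponents `1 / θ` and `1 / (1 - θ)`
interpolates `‖∇^l f‖²` between `‖∇^(l+1) f‖²` and `‖Λ^(-s) f‖² ≤ K²`. Raising to the power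
`1 / θ = 1 + 1 / (l + s)` gives the claim with `C = 1`.
-/

open MeasureTheory FourierTransform

open scoped ENNReal NNReal

abbrev E3 : Type := EuclideanSpace ℝ (Fin 3)

section WeightedInterpolation

variable {α E : Type*} [MeasurableSpace α] {μ : Measure α}
  [NormedAddCommGroup E] [NormedSpace ℝ E]

theorem enorm_rpow_smul {r : ℝ} (hr : 0 < r) (a : ℝ) (x : E) :
    ‖r ^ a • x‖ₑ = ENNReal.ofReal r ^ a * ‖x‖ₑ := by
  rw [enorm_smul, Real.enorm_eq_ofReal (Real.rpow_nonneg hr.le a), ENNReal.ofReal_rpow_of_pos hr]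

theorem ENNReal.rpow_mul_rpow_of_convex_exponent {R : ℝ≥0∞} (hR0 : R ≠ 0) (hR : R ≠ ⊤)
    (m : ℝ≥0∞) {p θ : ℝ} (hp : 0 ≤ p) (hθ0 : 0 ≤ θ) (hθ1 : θ ≤ 1) (b c : ℝ) :
    ((R ^ b * m) ^ p) ^ θ * ((R ^ c * m) ^ p) ^ (1 - θ) = (R ^ (θ * b + (1 - θ) * c) * m) ^ p := by
  simp only [ENNReal.mul_rpow_of_nonneg _ _ hp, ENNReal.mul_rpow_of_nonneg _ _ hθ0,
    ENNReal.mul_rpow_of_nonneg _ _ (sub_nonneg.2 hθ1), ← ENNReal.rpow_mul]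
  rw [mul_mul_mul_comm, ← ENNReal.rpow_add _ _ hR0 hR,
    ← ENNReal.rpow_add_of_nonneg _ _ (by positivity) (mul_nonneg hp (sub_nonneg.2 hθ1))]
  congr 2 <;> ring

theorem eLpNorm_rpow_smul_pow_le {F : α → E} {r : α → ℝ} (hF : AEStronglyMeasurable F μ)
    (hr : AEMeasurable r μ) (hr_pos : ∀ᵐ x ∂μ, 0 < r x) {p : ℝ≥0} (hp : p ≠ 0)
    {θ : ℝ} (hθ0 : 0 ≤ θ) (hθ1 : θ ≤ 1) (b c : ℝ) :
    eLpNorm (fun x => r x ^ (θ * b + (1 - θ) * c) • F x) p μ ^ (p : ℝ) ≤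
      (eLpNorm (fun x => r x ^ b • F x) p μ ^ (p : ℝ)) ^ θ *
        (eLpNorm (fun x => r x ^ c • F x) p μ ^ (p : ℝ)) ^ (1 - θ) := by
  have hmeas : ∀ a : ℝ, AEMeasurable (fun x => ‖r x ^ a • F x‖ₑ ^ (p : ℝ)) μ := fun a =>
    ((hr.pow_const a).aestronglyMeasurable.smul hF).enorm.pow_const _
  simp only [eLpNorm_nnreal_pow_eq_lintegral hp]
  calc ∫⁻ x, ‖r x ^ (θ * b + (1 - θ) * c) • F x‖ₑ ^ (p : ℝ) ∂μ
      = ∫⁻ x, (‖r x ^ b • F x‖ₑ ^ (p : ℝ)) ^ θ * (‖r x ^ c • F x‖ₑ ^ (p : ℝ)) ^ (1 - θ) ∂μ := by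
        refine lintegral_congr_ae ?_
        filter_upwards [hr_pos] with x hx
        have hR0 : ENNReal.ofReal (r x) ≠ 0 := (ENNReal.ofReal_pos.2 hx).ne'
        simp only [enorm_rpow_smul hx]
        exact (ENNReal.rpow_mul_rpow_of_convex_exponent hR0 ENNReal.ofReal_ne_top _ p.coe_nonneg
          hθ0 hθ1 b c).symm
    _ ≤ _ := ENNReal.lintegral_mul_norm_pow_le (hmeas b) (hmeas c) hθ0 (sub_nonneg.2 hθ1)
        (by ring)

end WeightedInterpolation

theorem ENNReal.rpow_neg_inv_mul_rpow_one_add_inv_le {X Y Z κ : ℝ≥0∞} {t : ℝ} (ht : 0 < t)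
    (h : X ≤ Y ^ (t / (t + 1)) * Z ^ (1 / (t + 1))) (hZ : Z ≤ κ) (hκ0 : κ ≠ 0) (hκ : κ ≠ ⊤) :
    κ ^ (-1 / t) * X ^ (1 + 1 / t) ≤ Y := by
  have hXY : X ^ (1 + 1 / t) ≤ Y * κ ^ (1 / t) :=
    calc X ^ (1 + 1 / t) ≤ (Y ^ (t / (t + 1)) * Z ^ (1 / (t + 1))) ^ (1 + 1 / t) :=
          ENNReal.rpow_le_rpow h (by positivity)
      _ = Y * Z ^ (1 / t) := by
          have hY : t / (t + 1) * (1 + 1 / t) = 1 := by field_simp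
          have hZ : 1 / (t + 1) * (1 + 1 / t) = 1 / t := by field_simp
          rw [ENNReal.mul_rpow_of_nonneg _ _ (by positivity), ← ENNReal.rpow_mul,
            ← ENNReal.rpow_mul, hY, hZ, ENNReal.rpow_one]
      _ ≤ Y * κ ^ (1 / t) := by gcongr
  calc κ ^ (-1 / t) * X ^ (1 + 1 / t) ≤ κ ^ (-1 / t) * (Y * κ ^ (1 / t)) := by gcongr
    _ = Y := by
        rw [mul_left_comm, ← ENNReal.rpow_add _ _ hκ0 hκ, neg_div, neg_add_cancel,
          ENNReal.rpow_zero, mul_one]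

theorem stmt5_general (l s : ℝ) (hls : 0 < l + s) :
    ∃ C > 0, ∀ (f : SchwartzMap E3 ℂ) (K : ℝ), 0 < K →
      eLpNorm (fun ξ : E3 => (‖ξ‖ ^ (-s) : ℝ) • 𝓕 (⇑f) ξ) 2 volume ≤ ENNReal.ofReal K →
      ENNReal.ofReal (C * K ^ (-2 / (l + s))) *
          (eLpNorm (fun ξ : E3 => (‖ξ‖ ^ l : ℝ) • 𝓕 (⇑f) ξ) 2 volume ^ (2 : ℝ))
            ^ (1 + 1 / (l + s)) ≤
        eLpNorm (fun ξ : E3 => (‖ξ‖ ^ (l + 1) : ℝ) • 𝓕 (⇑f) ξ) 2 volume ^ (2 : ℝ) := by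
  refine ⟨1, one_pos, fun f K hK hfK => ?_⟩
  have hθ : 0 ≤ (l + s) / (l + s + 1) := by positivity
  have hθ1 : (l + s) / (l + s + 1) ≤ 1 := div_le_one_of_le₀ (by linarith) (by linarith)
  have hnorm_pos : ∀ᵐ ξ : E3, 0 < ‖ξ‖ := by
    filter_upwards [volume.ae_ne 0] with ξ hξ using norm_pos_iff.2 hξ
  have hinterp := eLpNorm_rpow_smul_pow_le (𝓕 f).continuous.aestronglyMeasurable
    measurable_norm.aemeasurable hnorm_pos (two_ne_zero (α := ℝ≥0)) hθ hθ1 (l + 1) (-s)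
  have hexp : (l + s) / (l + s + 1) * (l + 1) + (1 - (l + s) / (l + s + 1)) * -s = l := by
    field_simp; ring
  have h1θ : 1 - (l + s) / (l + s + 1) = 1 / (l + s + 1) := by field_simp; ring
  rw [hexp, h1θ] at hinterp
  push_cast at hinterp
  rw [one_mul, ← ENNReal.ofReal_rpow_of_pos hK,
    show -2 / (l + s) = 2 * (-1 / (l + s)) by ring, ENNReal.rpow_mul]
  exact ENNReal.rpow_neg_inv_mul_rpow_one_add_inv_le hls hinterp
    (ENNReal.rpow_le_rpow hfK two_pos.le) (by positivity) (by simp)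

/-- **Rearranged negative-Sobolev interpolation.** If `‖Λ^{-s} f‖_{L²} ≤ K`, then
`‖∇^{l+1} f‖_{L²}² ≥ C K^{-2/(l+s)} (‖∇^l f‖_{L²}²)^{1+1/(l+s)}`, stated on the Fourier
side for Schwartz functions on ℝ³. -/
theorem stmt5 (l s : ℝ) (hl : 0 ≤ l) (hs : 0 ≤ s) (hls : 0 < l + s) :
    ∃ C > 0, ∀ (f : SchwartzMap E3 ℂ) (K : ℝ), 0 < K →
      eLpNorm (fun ξ : E3 => (‖ξ‖ ^ (-s) : ℝ) • 𝓕 (⇑f) ξ) 2 volume ≤ ENNReal.ofReal K →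
      ENNReal.ofReal (C * K ^ (-2 / (l + s))) *
          (eLpNorm (fun ξ : E3 => (‖ξ‖ ^ l : ℝ) • 𝓕 (⇑f) ξ) 2 volume ^ (2 : ℝ))
            ^ (1 + 1 / (l + s)) ≤
        eLpNorm (fun ξ : E3 => (‖ξ‖ ^ (l + 1) : ℝ) • 𝓕 (⇑f) ξ) 2 volume ^ (2 : ℝ) :=
  stmt5_general l s hls
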